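/- Let μ, ν be Borel probability measures on ℝ with finite p-th moments (p ≥ 1), and let q_μ, q_ν denote their quantile functions. Then W_p^p(μ, ν) = ∫_0^1 |q_μ(t) − q_ν(t)|^p dt. -/

import Mathlib

open MeasureTheory ENNReal

/-- `W_p^p(μ, ν)` on `ℝ`: the Kantorovich optimal transport cost for the cost `|x - y|^p`. -/
noncomputable def Wpp (p : ℝ) (μ ν : Measure ℝ) : ℝ≥0∞ :=
  ⨅ (γ : Measure (ℝ × ℝ)) (_ : γ.map Prod.fst = μ) (_ : γ.map Prod.snd = ν),
    ∫⁻ q, (‖q.1 - q.2‖₊ : ℝ≥0∞) ^ p ∂γ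

/-- The quantile function `q_μ(t) = inf {x : μ((-∞, x]) ≥ t}`. -/
noncomputable def quantile (μ : Measure ℝ) (t : ℝ) : ℝ :=
  sInf {x : ℝ | ENNReal.ofReal t ≤ μ (Set.Iic x)}

/-!
For `p ≥ 1`, `|x - y| ^ p = ∫∫ (1{y ≤ s < x - t} + 1{x ≤ s < y - t}) ds dσ_p(t)`, where the
positive measure `σ_p` has density `p (p - 1) t ^ (p - 2)` on `(0, ∞)` (and is `δ₀` if `p = 1`):
this is Taylor's formula for the convex function `|z| ^ p`. Integrating against a coupling `γ` of `μ` and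
`ν` turns the transport cost into a positive mixture of the masses `γ {y ≤ a, b < x}` and
`γ {x ≤ a, b < y}`. Each is bounded below by a Fréchet–Hoeffding bound such as
`ν (-∞, a] - μ (-∞, b]`, and the quantile coupling `t ↦ (q_μ t, q_ν t)` attains all of these bounds
at once, so it is optimal.
-/

open Set Filter Topology ProbabilityTheory Real

theorem StieltjesFunction.sInf_setOf_le_le_iff (f : StieltjesFunction ℝ) {t : ℝ}
    (hne : {y | t ≤ f y}.Nonempty) (hbdd : BddBelow {y | t ≤ f y}) (x : ℝ) :
    sInf {y | t ≤ f y} ≤ x ↔ t ≤ f x := by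
  refine ⟨fun hx => le_trans ?_ (f.mono hx), fun hx => csInf_le hbdd hx⟩
  rw [← f.iInf_Ioi_eq]
  refine le_ciInf fun r => ?_
  obtain ⟨y, hy, hyr⟩ := exists_lt_of_csInf_lt hne r.2
  exact hy.trans (f.mono hyr.le)

section Quantile

variable (μ : Measure ℝ) [IsProbabilityMeasure μ]

theorem quantile_eq_sInf_cdf (t : ℝ) : quantile μ t = sInf {x | t ≤ cdf μ x} := by
  simp_rw [quantile, ← ofReal_cdf, ENNReal.ofReal_le_ofReal_iff (cdf_nonneg μ _)]

variable {μ}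

theorem quantile_le_iff {t : ℝ} (ht : t ∈ Ioo 0 1) (x : ℝ) :
    quantile μ t ≤ x ↔ t ≤ cdf μ x := by
  rw [quantile_eq_sInf_cdf]
  refine (cdf μ).sInf_setOf_le_le_iff ?_ ?_ x
  · exact ((tendsto_cdf_atTop μ).eventually_const_le ht.2).exists
  · obtain ⟨a, ha⟩ := eventually_atBot.1 ((tendsto_cdf_atBot μ).eventually_lt_const ht.1)
    exact ⟨a, fun y hy => not_lt.1 fun hya => (ha y hya.le).not_ge hy⟩

theorem lt_quantile_iff {t : ℝ} (ht : t ∈ Ioo 0 1) (x : ℝ) :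
    x < quantile μ t ↔ cdf μ x < t := by
  simpa only [not_le] using (quantile_le_iff ht x).not

theorem monotoneOn_quantile : MonotoneOn (quantile μ) (Ioo 0 1) := fun _ ht _ ht' htt' =>
  (quantile_le_iff ht _).2 (htt'.trans ((quantile_le_iff ht' _).1 le_rfl))

theorem aemeasurable_quantile :
    AEMeasurable (quantile μ) (volume.restrict (Ioo 0 1)) :=
  aemeasurable_restrict_of_monotoneOn measurableSet_Ioo monotoneOn_quantile

end Quantile

theorem volume_Ioc_inter_Ioo_zero_one {a b : ℝ} (ha : 0 ≤ a) (hb : b ≤ 1) :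
    volume (Ioc a b ∩ Ioo 0 1) = ENNReal.ofReal (b - a) := by
  rw [measure_congr ((ae_eq_refl _).inter Ioo_ae_eq_Icc),
    inter_eq_left.2 (Ioc_subset_Icc_self.trans (Icc_subset_Icc ha hb)), Real.volume_Ioc]

noncomputable def quantileCoupling (μ ν : Measure ℝ) : Measure (ℝ × ℝ) :=
  (volume.restrict (Ioo 0 1)).map fun t => (quantile μ t, quantile ν t)

section QuantileCoupling

variable (μ ν : Measure ℝ) [IsProbabilityMeasure μ] [IsProbabilityMeasure ν]

theorem aemeasurable_quantile_prod :
    AEMeasurable (fun t => (quantile μ t, quantile ν t)) (volume.restrict (Ioo 0 1)) :=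
  aemeasurable_quantile.prodMk aemeasurable_quantile

theorem map_quantile : (volume.restrict (Ioo 0 1)).map (quantile μ) = μ := by
  refine Measure.ext_of_Iic _ _ fun x => ?_
  have : quantile μ ⁻¹' Iic x ∩ Ioo 0 1 = Ioc 0 (cdf μ x) ∩ Ioo 0 1 := by
    ext t
    simp only [mem_inter_iff, mem_preimage, mem_Iic, mem_Ioc]
    exact ⟨fun ⟨h, ht⟩ => ⟨⟨ht.1, (quantile_le_iff ht x).1 h⟩, ht⟩,
      fun ⟨h, ht⟩ => ⟨(quantile_le_iff ht x).2 h.2, ht⟩⟩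
  rw [Measure.map_apply_of_aemeasurable aemeasurable_quantile measurableSet_Iic,
    Measure.restrict_apply' measurableSet_Ioo, this,
    volume_Ioc_inter_Ioo_zero_one le_rfl (cdf_le_one μ x), sub_zero, ofReal_cdf]

theorem quantileCoupling_map_fst : (quantileCoupling μ ν).map Prod.fst = μ := by
  rw [quantileCoupling, AEMeasurable.map_map_of_aemeasurable measurable_fst.aemeasurable
    (aemeasurable_quantile_prod μ ν)]
  exact map_quantile μ

theorem quantileCoupling_map_snd : (quantileCoupling μ ν).map Prod.snd = ν := by
  rw [quantileCoupling, AEMeasurable.map_map_of_aemeasurable measurable_snd.aemeasurable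
    (aemeasurable_quantile_prod μ ν)]
  exact map_quantile ν

instance : IsProbabilityMeasure (quantileCoupling μ ν) := by
  have : IsProbabilityMeasure (volume.restrict (Ioo (0 : ℝ) 1)) := ⟨by simp⟩
  exact Measure.isProbabilityMeasure_map (aemeasurable_quantile_prod μ ν)

theorem lintegral_quantileCoupling {f : ℝ × ℝ → ℝ≥0∞} (hf : Measurable f) :
    ∫⁻ q, f q ∂quantileCoupling μ ν = ∫⁻ t in Ioo 0 1, f (quantile μ t, quantile ν t) :=
  lintegral_map' hf.aemeasurable (aemeasurable_quantile_prod μ ν)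

theorem volume_setOf_quantile_le_and_lt_quantile (a b : ℝ) :
    volume ({t | quantile ν t ≤ a ∧ b < quantile μ t} ∩ Ioo 0 1) = ν (Iic a) - μ (Iic b) := by
  have : {t | quantile ν t ≤ a ∧ b < quantile μ t} ∩ Ioo 0 1
      = Ioc (cdf μ b) (cdf ν a) ∩ Ioo 0 1 := by
    ext t
    simp only [mem_inter_iff, mem_ofPred_eq, mem_Ioc]
    exact ⟨fun ⟨h, ht⟩ => ⟨⟨(lt_quantile_iff ht b).1 h.2, (quantile_le_iff ht a).1 h.1⟩, ht⟩,
      fun ⟨h, ht⟩ => ⟨⟨(quantile_le_iff ht a).2 h.2, (lt_quantile_iff ht b).2 h.1⟩, ht⟩⟩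
  rw [this, volume_Ioc_inter_Ioo_zero_one (cdf_nonneg μ b) (cdf_le_one ν a),
    ENNReal.ofReal_sub _ (cdf_nonneg μ b), ofReal_cdf, ofReal_cdf]

theorem quantileCoupling_apply {S : Set (ℝ × ℝ)} (hS : MeasurableSet S) :
    quantileCoupling μ ν S = volume ((fun t => (quantile μ t, quantile ν t)) ⁻¹' S ∩ Ioo 0 1) := by
  rw [quantileCoupling, Measure.map_apply_of_aemeasurable (aemeasurable_quantile_prod μ ν) hS,
    Measure.restrict_apply' measurableSet_Ioo]

theorem quantileCoupling_snd_le_and_lt_fst (a b : ℝ) :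
    quantileCoupling μ ν {q | q.2 ≤ a ∧ b < q.1} = ν (Iic a) - μ (Iic b) := by
  have hS : MeasurableSet {q : ℝ × ℝ | q.2 ≤ a ∧ b < q.1} :=
    (measurableSet_le measurable_snd measurable_const).inter
      (measurableSet_lt measurable_const measurable_fst)
  rw [quantileCoupling_apply μ ν hS]
  exact volume_setOf_quantile_le_and_lt_quantile μ ν a b

theorem quantileCoupling_fst_le_and_lt_snd (a b : ℝ) :
    quantileCoupling μ ν {q | q.1 ≤ a ∧ b < q.2} = μ (Iic a) - ν (Iic b) := by
  have hS : MeasurableSet {q : ℝ × ℝ | q.1 ≤ a ∧ b < q.2} :=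
    (measurableSet_le measurable_fst measurable_const).inter
      (measurableSet_lt measurable_const measurable_snd)
  rw [quantileCoupling_apply μ ν hS]
  exact volume_setOf_quantile_le_and_lt_quantile ν μ a b

end QuantileCoupling

theorem integral_mul_rpow_mul_sub {p z : ℝ} (hp : 1 < p) (hz : 0 ≤ z) :
    ∫ t in 0..z, p * (p - 1) * t ^ (p - 2) * (z - t) = z ^ p := by
  have hpow : ∀ t ∈ uIcc 0 z, t ^ (p - 1) = t ^ (p - 2) * t := fun t ht => by
    rw [← rpow_add_one' (uIcc_of_le hz ▸ ht).1 (by linarith)]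
    ring_nf
  have hsplit : ∀ t ∈ uIcc 0 z, p * (p - 1) * t ^ (p - 2) * (z - t)
      = p * (p - 1) * z * t ^ (p - 2) - p * (p - 1) * t ^ (p - 1) := fun t ht => by
    rw [hpow t ht]
    ring
  have hint : ∀ r : ℝ, -1 < r → IntervalIntegrable (fun t : ℝ => t ^ r) volume 0 z :=
    fun _ hr => intervalIntegral.intervalIntegrable_rpow' hr
  have hzp : z ^ p = z ^ (p - 1) * z := by rw [← rpow_add_one' hz (by linarith), sub_add_cancel]
  rw [intervalIntegral.integral_congr hsplit,
    intervalIntegral.integral_sub ((hint (p - 2) (by linarith)).const_mul _)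
      ((hint (p - 1) (by linarith)).const_mul _),
    intervalIntegral.integral_const_mul, intervalIntegral.integral_const_mul,
    integral_rpow (Or.inl (by linarith)), integral_rpow (Or.inl (by linarith)),
    zero_rpow (by linarith), zero_rpow (by linarith),
    show p - 2 + 1 = p - 1 by ring, show p - 1 + 1 = p by ring, hzp]
  have hp₀ : p ≠ 0 := by linarith
  have hp₁ : p - 1 ≠ 0 := by linarith
  field_simp
  ring

theorem setLIntegral_Ioi_mul_ofReal_sub_eq_zero (f : ℝ → ℝ≥0∞) {c z : ℝ} (hz : z ≤ c) :
    ∫⁻ t in Ioi c, f t * ENNReal.ofReal (z - t) = 0 := by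
  refine (setLIntegral_congr_fun measurableSet_Ioi fun t ht => ?_).trans lintegral_zero
  rw [ofReal_of_nonpos (by linarith [mem_Ioi.1 ht]), mul_zero]

theorem setLIntegral_Ioi_rpow_density_mul_ofReal_sub {p : ℝ} (hp : 1 < p) (z : ℝ) :
    ∫⁻ t in Ioi 0, ENNReal.ofReal (p * (p - 1) * t ^ (p - 2)) * ENNReal.ofReal (z - t)
      = ENNReal.ofReal (max z 0 ^ p) := by
  rcases le_or_gt z 0 with hz | hz
  · rw [setLIntegral_Ioi_mul_ofReal_sub_eq_zero _ hz, max_eq_right hz, zero_rpow (by linarith),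
      ofReal_zero]
  have hint : IntegrableOn (fun t => p * (p - 1) * t ^ (p - 2) * (z - t)) (Ioc 0 z) :=
    (intervalIntegrable_iff_integrableOn_Ioc_of_le hz.le).1
      (((intervalIntegral.intervalIntegrable_rpow' (by linarith)).const_mul _).mul_continuousOn
        (continuousOn_const.sub continuousOn_id))
  have hnonneg : ∀ t ∈ Ioc 0 z, 0 ≤ p * (p - 1) * t ^ (p - 2) := fun t ht =>
    mul_nonneg (mul_nonneg (by linarith) (by linarith)) (rpow_nonneg ht.1.le _)
  rw [max_eq_left hz.le, ← Ioc_union_Ioi_eq_Ioi hz.le,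
    lintegral_union measurableSet_Ioi (Ioc_disjoint_Ioi le_rfl),
    setLIntegral_Ioi_mul_ofReal_sub_eq_zero _ le_rfl, add_zero,
    ← integral_mul_rpow_mul_sub hp hz.le, intervalIntegral.integral_of_le hz.le,
    ofReal_integral_eq_lintegral_ofReal hint]
  · exact setLIntegral_congr_fun measurableSet_Ioc fun t ht => (ofReal_mul (hnonneg t ht)).symm
  · filter_upwards [ae_restrict_mem measurableSet_Ioc] with t ht
    exact mul_nonneg (hnonneg t ht) (sub_nonneg.2 ht.2)

noncomputable def rpowHingeMeasure (p : ℝ) : Measure ℝ :=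
  if p = 1 then Measure.dirac 0
  else (volume.restrict (Ioi 0)).withDensity fun t => ENNReal.ofReal (p * (p - 1) * t ^ (p - 2))

instance (p : ℝ) : SFinite (rpowHingeMeasure p) := by
  unfold rpowHingeMeasure
  split <;> infer_instance

theorem ofReal_abs_rpow_eq_lintegral_rpowHingeMeasure {p : ℝ} (hp : 1 ≤ p) (z : ℝ) :
    ENNReal.ofReal (|z| ^ p)
      = ∫⁻ t, (ENNReal.ofReal (z - t) + ENNReal.ofReal (-z - t)) ∂rpowHingeMeasure p := by
  rcases hp.eq_or_lt with rfl | hp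
  · rcases le_total 0 z with h | h <;>
      simp [rpowHingeMeasure, h, abs_of_nonneg, abs_of_nonpos, ofReal_of_nonpos]
  have hdensity : Measurable fun t : ℝ => ENNReal.ofReal (p * (p - 1) * t ^ (p - 2)) := by
    fun_prop
  rw [rpowHingeMeasure, if_neg hp.ne', lintegral_withDensity_eq_lintegral_mul _ hdensity
      (by fun_prop)]
  simp only [Pi.mul_apply, mul_add]
  rw [lintegral_add_left (by fun_prop), setLIntegral_Ioi_rpow_density_mul_ofReal_sub hp,
    setLIntegral_Ioi_rpow_density_mul_ofReal_sub hp, ← ofReal_add (by positivity) (by positivity)]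
  rcases le_total 0 z with h | h <;>
    simp [h, abs_of_nonneg, abs_of_nonpos, zero_rpow (by linarith : p ≠ 0)]

theorem lintegral_ofReal_sub_eq_lintegral_measure {X : Type*} [MeasurableSpace X]
    (γ : Measure X) [SFinite γ] {f g : X → ℝ} (hf : Measurable f) (hg : Measurable g) :
    ∫⁻ x, ENNReal.ofReal (f x - g x) ∂γ = ∫⁻ s, γ {x | g x ≤ s ∧ s < f x} := by
  have hA : MeasurableSet {q : X × ℝ | g q.1 ≤ q.2 ∧ q.2 < f q.1} :=
    (measurableSet_le (hg.comp measurable_fst) measurable_snd).inter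
      (measurableSet_lt measurable_snd (hf.comp measurable_fst))
  calc ∫⁻ x, ENNReal.ofReal (f x - g x) ∂γ = ∫⁻ x, volume (Ico (g x) (f x)) ∂γ := by
        simp_rw [Real.volume_Ico]
    _ = γ.prod volume {q : X × ℝ | g q.1 ≤ q.2 ∧ q.2 < f q.1} := (Measure.prod_apply hA).symm
    _ = ∫⁻ s, γ {x | g x ≤ s ∧ s < f x} := Measure.prod_apply_symm hA

theorem lintegral_ofReal_abs_sub_rpow {p : ℝ} (hp : 1 ≤ p) (γ : Measure (ℝ × ℝ)) [SFinite γ] :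
    ∫⁻ q, ENNReal.ofReal (|q.1 - q.2| ^ p) ∂γ
      = ∫⁻ t, ((∫⁻ s, γ {q | q.2 ≤ s ∧ s < q.1 - t}) + ∫⁻ s, γ {q | q.1 ≤ s ∧ s < q.2 - t})
          ∂rpowHingeMeasure p := by
  have hsplit : ∀ q : ℝ × ℝ, ENNReal.ofReal (|q.1 - q.2| ^ p) = ∫⁻ t,
      (ENNReal.ofReal (q.1 - t - q.2) + ENNReal.ofReal (q.2 - t - q.1)) ∂rpowHingeMeasure p :=
    fun q => by
      simp only [ofReal_abs_rpow_eq_lintegral_rpowHingeMeasure hp, neg_sub, sub_right_comm q.1 q.2,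
        sub_right_comm q.2 q.1]
  rw [lintegral_congr hsplit, lintegral_lintegral_swap (by fun_prop)]
  refine lintegral_congr fun t => ?_
  rw [lintegral_add_left (by fun_prop),
    lintegral_ofReal_sub_eq_lintegral_measure γ (by fun_prop) measurable_snd,
    lintegral_ofReal_sub_eq_lintegral_measure γ (by fun_prop) measurable_fst]

theorem lintegral_ofReal_abs_sub_rpow_mono {p : ℝ} (hp : 1 ≤ p) {γ γ' : Measure (ℝ × ℝ)}
    [SFinite γ] [SFinite γ']
    (h₁ : ∀ a b, γ {q | q.2 ≤ a ∧ b < q.1} ≤ γ' {q | q.2 ≤ a ∧ b < q.1})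
    (h₂ : ∀ a b, γ {q | q.1 ≤ a ∧ b < q.2} ≤ γ' {q | q.1 ≤ a ∧ b < q.2}) :
    ∫⁻ q, ENNReal.ofReal (|q.1 - q.2| ^ p) ∂γ ≤ ∫⁻ q, ENNReal.ofReal (|q.1 - q.2| ^ p) ∂γ' := by
  simp only [lintegral_ofReal_abs_sub_rpow hp, lt_sub_iff_add_lt]
  exact lintegral_mono fun t => add_le_add (lintegral_mono fun s => h₁ s (s + t))
    (lintegral_mono fun s => h₂ s (s + t))

theorem map_snd_Iic_sub_map_fst_Iic_le (γ : Measure (ℝ × ℝ)) (a b : ℝ) :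
    γ.map Prod.snd (Iic a) - γ.map Prod.fst (Iic b) ≤ γ {q | q.2 ≤ a ∧ b < q.1} := by
  rw [Measure.map_apply measurable_snd measurableSet_Iic,
    Measure.map_apply measurable_fst measurableSet_Iic, tsub_le_iff_right]
  refine (measure_mono fun q hq => ?_).trans (measure_union_le _ _)
  by_cases hb : q.1 ≤ b
  exacts [Or.inr hb, Or.inl ⟨hq, not_le.1 hb⟩]

theorem map_fst_Iic_sub_map_snd_Iic_le (γ : Measure (ℝ × ℝ)) (a b : ℝ) :
    γ.map Prod.fst (Iic a) - γ.map Prod.snd (Iic b) ≤ γ {q | q.1 ≤ a ∧ b < q.2} := by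
  rw [Measure.map_apply measurable_fst measurableSet_Iic,
    Measure.map_apply measurable_snd measurableSet_Iic, tsub_le_iff_right]
  refine (measure_mono fun q hq => ?_).trans (measure_union_le _ _)
  by_cases hb : q.2 ≤ b
  exacts [Or.inr hb, Or.inl ⟨hq, not_le.1 hb⟩]

theorem lintegral_quantileCoupling_le {p : ℝ} (hp : 1 ≤ p) {μ ν : Measure ℝ}
    [IsProbabilityMeasure μ] [IsProbabilityMeasure ν] {γ : Measure (ℝ × ℝ)}
    (hγμ : γ.map Prod.fst = μ) (hγν : γ.map Prod.snd = ν) :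
    ∫⁻ q, ENNReal.ofReal (|q.1 - q.2| ^ p) ∂quantileCoupling μ ν
      ≤ ∫⁻ q, ENNReal.ofReal (|q.1 - q.2| ^ p) ∂γ := by
  have : IsProbabilityMeasure (γ.map Prod.fst) := hγμ ▸ inferInstance
  have := Measure.isProbabilityMeasure_of_map (μ := γ) Prod.fst
  refine lintegral_ofReal_abs_sub_rpow_mono hp (fun a b => ?_) (fun a b => ?_)
  · rw [quantileCoupling_snd_le_and_lt_fst, ← hγμ, ← hγν]
    exact map_snd_Iic_sub_map_fst_Iic_le γ a b
  · rw [quantileCoupling_fst_le_and_lt_snd, ← hγμ, ← hγν]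
    exact map_fst_Iic_sub_map_snd_Iic_le γ a b

theorem Wpp_eq_iInf_lintegral_ofReal {p : ℝ} (hp : 0 ≤ p) (μ ν : Measure ℝ) :
    Wpp p μ ν = ⨅ (γ : Measure (ℝ × ℝ)) (_ : γ.map Prod.fst = μ) (_ : γ.map Prod.snd = ν),
      ∫⁻ q, ENNReal.ofReal (|q.1 - q.2| ^ p) ∂γ := by
  simp_rw [Wpp, ← enorm_eq_nnnorm, Real.enorm_eq_ofReal_abs,
    ENNReal.ofReal_rpow_of_nonneg (abs_nonneg _) hp]

theorem stmt9_general (p : ℝ) (hp : 1 ≤ p) (μ ν : Measure ℝ)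
    [IsProbabilityMeasure μ] [IsProbabilityMeasure ν] :
    Wpp p μ ν
      = ∫⁻ t in Set.Ioo (0 : ℝ) 1,
          ENNReal.ofReal (|quantile μ t - quantile ν t| ^ p) := by
  rw [Wpp_eq_iInf_lintegral_ofReal (by linarith), ← lintegral_quantileCoupling μ ν
    (f := fun q => ENNReal.ofReal (|q.1 - q.2| ^ p)) (by fun_prop)]
  refine le_antisymm ?_ (le_iInf₂ fun γ hγμ => le_iInf fun hγν => ?_)
  · exact iInf₂_le_of_le _ (quantileCoupling_map_fst μ ν) (iInf_le _ (quantileCoupling_map_snd μ ν))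
  · exact lintegral_quantileCoupling_le hp hγμ hγν

theorem stmt9 (p : ℝ) (hp : 1 ≤ p) (μ ν : Measure ℝ)
    [IsProbabilityMeasure μ] [IsProbabilityMeasure ν]
    (hμm : ∫⁻ x, (‖x‖₊ : ℝ≥0∞) ^ p ∂μ < ⊤)
    (hνm : ∫⁻ y, (‖y‖₊ : ℝ≥0∞) ^ p ∂ν < ⊤) :
    Wpp p μ ν
      = ∫⁻ t in Set.Ioo (0 : ℝ) 1,
          ENNReal.ofReal (|quantile μ t - quantile ν t| ^ p) :=
  stmt9_general p hp μ ν
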